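/- Let k ≥ 2 be a natural number and p ≥ k be a prime, let n be a natural number, and let f₀, f₁, ..., f_{k−1} : 𝔽_pⁿ → ℂ be 1-bounded functions. Then |𝔼_{x, y ∈ 𝔽_pⁿ} f₀(x) f₁(x+y) ⋯ f_{k−1}(x + (k−1)y)| ≤ ‖f_{k−1}‖_{U^{k−1}}. -/

import Mathlib

open scoped BigOperators

/-- The multiplicative discrete derivative `Δ_h f(x) = f(x) · conj(f(x+h))`. -/
noncomputable def mDeriv {G : Type*} [AddCommGroup G] (h : G) (f : G → ℂ) : G → ℂ :=
  fun x => f x * (starRingEnd ℂ) (f (x + h))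

/-- The iterated multiplicative discrete derivative `Δ_{h₁,...,h_s} f`. -/
noncomputable def mDerivs {G : Type*} [AddCommGroup G] :
    (s : ℕ) → (Fin s → G) → (G → ℂ) → G → ℂ
  | 0, _, f => f
  | s + 1, h, f => mDerivs s (fun i => h i.succ) (mDeriv (h 0) f)

/-- The Gowers `U^s`-norm `‖f‖_{U^s} = (𝔼_{x,h₁,...,h_s} Δ_{h₁,...,h_s} f(x))^{1/2^s}`. -/
noncomputable def gowersNorm {G : Type*} [AddCommGroup G] [Fintype G] (s : ℕ)
    (f : G → ℂ) : ℝ :=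
  (((∑ x : G, ∑ h : Fin s → G, mDerivs s h f x) /
      (Fintype.card G : ℂ) ^ (s + 1)).re) ^ ((1 : ℝ) / 2 ^ s)

open Finset

section Aux
variable {G : Type*} [AddCommGroup G] [Fintype G]

noncomputable def gS (s : ℕ) (f : G → ℂ) : ℂ :=
  ∑ x : G, ∑ h : Fin s → G, mDerivs s h f x

lemma gS_zero (f : G → ℂ) : gS 0 f = ∑ x : G, f x := by
  simp [gS, mDerivs]

lemma mDerivs_cons (s : ℕ) (a : G) (t : Fin s → G) (f : G → ℂ) :
    mDerivs (s + 1) (Fin.cons (α := fun _ => G) a t) f = mDerivs s t (mDeriv a f) := by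
  simp only [mDerivs, Fin.cons_zero, Fin.cons_succ]

lemma gS_succ (s : ℕ) (f : G → ℂ) : gS (s + 1) f = ∑ a : G, gS s (mDeriv a f) := by
  unfold gS
  rw [Finset.sum_comm]
  rw [← Equiv.sum_comp (Fin.consEquiv (fun _ : Fin (s+1) => G))
    (fun h => ∑ x : G, mDerivs (s+1) h f x)]
  rw [Fintype.sum_prod_type]
  refine Finset.sum_congr rfl fun a _ => ?_
  rw [Finset.sum_comm]
  refine Finset.sum_congr rfl fun x _ => ?_
  refine Finset.sum_congr rfl fun t _ => ?_
  show mDerivs (s+1) (Fin.cons a t) f x = _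
  rw [mDerivs_cons]

omit [Fintype G] in
lemma mDeriv_bounded {f : G → ℂ} (hf : ∀ x, ‖(f x)‖ ≤ 1) (a x : G) :
    ‖(mDeriv a f x)‖ ≤ 1 := by
  unfold mDeriv
  rw [norm_mul, Complex.norm_conj]
  exact mul_le_one₀ (hf x) (norm_nonneg _) (hf _)

end Aux

lemma abs_sum_le_card {G : Type*} [Fintype G] (g : G → ℂ)
    (hg : ∀ x, ‖(g x)‖ ≤ 1) :
    ‖(∑ x : G, g x)‖ ≤ (Fintype.card G : ℝ) := by
  refine le_trans (norm_sum_le _ _) ?_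
  calc ∑ x : G, ‖(g x)‖ ≤ ∑ _x : G, (1:ℝ) :=
        Finset.sum_le_sum fun x _ => hg x
    _ = (Fintype.card G : ℝ) := by simp

lemma base2 {G : Type*} [AddCommGroup G] [Fintype G] (f : Fin 2 → G → ℂ)
    (hf : ∀ i x, ‖(f i x)‖ ≤ 1) :
    ‖(∑ x : G, ∑ y : G, ∏ i : Fin 2, f i (x + (i : ℕ) • y))‖ ^ 2 ≤
      (Fintype.card G : ℝ) ^ 2 * (gS 1 (f 1)).re := by
  have hsum : ∀ x : G, ∑ z : G, f 1 (x + z) = ∑ z : G, f 1 z := fun x =>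
    Equiv.sum_comp (Equiv.addLeft x) (f 1)
  have h1 : ∀ x : G, ∑ y : G, ∏ i : Fin 2, f i (x + (i : ℕ) • y)
      = f 0 x * ∑ z : G, f 1 z := by
    intro x
    calc ∑ y : G, ∏ i : Fin 2, f i (x + (i : ℕ) • y)
        = ∑ y : G, f 0 x * f 1 (x + y) :=
          Finset.sum_congr rfl fun y _ => by rw [Fin.prod_univ_two]; norm_num
      _ = f 0 x * ∑ y : G, f 1 (x + y) := by rw [Finset.mul_sum]
      _ = f 0 x * ∑ z : G, f 1 z := by rw [hsum x]
  have hS : (∑ x : G, ∑ y : G, ∏ i : Fin 2, f i (x + (i : ℕ) • y))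
      = (∑ x : G, f 0 x) * (∑ z : G, f 1 z) := by
    calc ∑ x : G, ∑ y : G, ∏ i : Fin 2, f i (x + (i : ℕ) • y)
        = ∑ x : G, f 0 x * ∑ z : G, f 1 z := Finset.sum_congr rfl fun x _ => h1 x
      _ = (∑ x : G, f 0 x) * ∑ z : G, f 1 z := by rw [Finset.sum_mul]
  have hg1 : gS 1 (f 1) = ∑ a : G, gS 0 (mDeriv a (f 1)) := gS_succ 0 (f 1)
  have hg : gS 1 (f 1) = (∑ z : G, f 1 z) * (starRingEnd ℂ) (∑ z : G, f 1 z) := by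
    rw [hg1]
    simp only [gS_zero, mDeriv]
    rw [Finset.sum_comm]
    calc ∑ x : G, ∑ a : G, f 1 x * (starRingEnd ℂ) (f 1 (x + a))
        = ∑ x : G, f 1 x * (starRingEnd ℂ) (∑ z : G, f 1 z) :=
          Finset.sum_congr rfl fun x _ => by rw [← Finset.mul_sum, ← map_sum, hsum x]
      _ = (∑ x : G, f 1 x) * (starRingEnd ℂ) (∑ z : G, f 1 z) := by rw [Finset.sum_mul]
  have h2 : (gS 1 (f 1)).re = ‖(∑ z : G, f 1 z)‖ ^ 2 := by
    rw [hg, Complex.mul_conj, Complex.sq_norm]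
    simp
  rw [hS, norm_mul, mul_pow, h2]
  gcongr
  exact abs_sum_le_card (f 0) (hf 0)

lemma cs_step {G : Type*} [AddCommGroup G] [Fintype G] (k : ℕ) (f : Fin (k+1) → G → ℂ)
    (hf0 : ∀ x, ‖(f 0 x)‖ ≤ 1) :
    ‖(∑ x : G, ∑ y : G, ∏ i : Fin (k+1), f i (x + (i : ℕ) • y))‖ ^ 2 ≤
      (Fintype.card G : ℝ) *
        ∑ a : G, ‖(∑ x : G, ∑ y : G,
          ∏ i : Fin k, mDeriv (((i : ℕ) + 1) • a) (f i.succ) (x + (i : ℕ) • y))‖ := by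
  classical
  set P : G → G → ℂ := fun x y => ∏ i : Fin k, f i.succ (x + ((i:ℕ)+1) • y) with hP
  set B : G → ℂ := fun x => ∑ y : G, P x y with hB
  have hsplit : (∑ x : G, ∑ y : G, ∏ i : Fin (k+1), f i (x + (i : ℕ) • y))
      = ∑ x : G, f 0 x * B x := by
    refine Finset.sum_congr rfl fun x _ => ?_
    simp only [hB, hP, Finset.mul_sum]
    refine Finset.sum_congr rfl fun y _ => ?_
    rw [Fin.prod_univ_succ]
    simp [Fin.val_succ]
  have habs : ‖(∑ x : G, f 0 x * B x)‖ ≤ ∑ x : G, ‖(B x)‖ := by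
    refine le_trans (norm_sum_le _ _) (Finset.sum_le_sum fun x _ => ?_)
    rw [norm_mul]
    exact mul_le_of_le_one_left (norm_nonneg _) (hf0 x)
  have hcs : (∑ x : G, ‖(B x)‖) ^ 2
      ≤ (Fintype.card G : ℝ) * ∑ x : G, ‖(B x)‖ ^ 2 := by
    have h := Finset.sum_mul_sq_le_sq_mul_sq Finset.univ (fun _ => (1:ℝ))
      (fun x => ‖(B x)‖)
    simpa using h
  have key : ∀ a x y : G,
      P (x - y) y * (starRingEnd ℂ) (P (x - y) (y + a)) =
      ∏ i : Fin k, mDeriv (((i:ℕ)+1) • a) (f i.succ) (x + (i:ℕ) • y) := by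
    intro a x y
    simp only [hP]
    rw [map_prod, ← Finset.prod_mul_distrib]
    refine Finset.prod_congr rfl fun i _ => ?_
    have h1 : (x - y) + ((i:ℕ)+1) • y = x + (i:ℕ) • y := by
      simp only [succ_nsmul]; abel
    have h2 : (x - y) + ((i:ℕ)+1) • (y + a) = (x + (i:ℕ) • y) + ((i:ℕ)+1) • a := by
      simp only [smul_add, succ_nsmul]; abel
    rw [h1, h2]
    rfl
  have e1 : ((∑ x : G, ‖(B x)‖ ^ 2 : ℝ) : ℂ)
      = ∑ x : G, B x * (starRingEnd ℂ) (B x) := by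
    rw [Complex.ofReal_sum]
    refine Finset.sum_congr rfl fun x _ => ?_
    rw [Complex.sq_norm, Complex.mul_conj]
  have e2 : ∀ x : G, B x * (starRingEnd ℂ) (B x)
      = ∑ y : G, ∑ a : G, P x y * (starRingEnd ℂ) (P x (y + a)) := by
    intro x
    simp only [hB]
    rw [Finset.sum_mul]
    refine Finset.sum_congr rfl fun y _ => ?_
    rw [map_sum, Finset.mul_sum]
    exact (Equiv.sum_comp (Equiv.addLeft y)
      (fun z => P x y * (starRingEnd ℂ) (P x z))).symm
  have hBsq : ((∑ x : G, ‖(B x)‖ ^ 2 : ℝ) : ℂ)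
      = ∑ a : G, ∑ x : G, ∑ y : G,
          ∏ i : Fin k, mDeriv (((i:ℕ)+1) • a) (f i.succ) (x + (i:ℕ) • y) := by
    calc ((∑ x : G, ‖(B x)‖ ^ 2 : ℝ) : ℂ)
        = ∑ x : G, B x * (starRingEnd ℂ) (B x) := e1
      _ = ∑ x : G, ∑ y : G, ∑ a : G, P x y * (starRingEnd ℂ) (P x (y + a)) :=
          Finset.sum_congr rfl fun x _ => e2 x
      _ = ∑ x : G, ∑ a : G, ∑ y : G, P x y * (starRingEnd ℂ) (P x (y + a)) :=
          Finset.sum_congr rfl fun x _ => Finset.sum_comm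
      _ = ∑ a : G, ∑ x : G, ∑ y : G, P x y * (starRingEnd ℂ) (P x (y + a)) :=
          Finset.sum_comm
      _ = ∑ a : G, ∑ y : G, ∑ x : G, P x y * (starRingEnd ℂ) (P x (y + a)) :=
          Finset.sum_congr rfl fun a _ => Finset.sum_comm
      _ = ∑ a : G, ∑ y : G, ∑ x : G,
            ∏ i : Fin k, mDeriv (((i:ℕ)+1) • a) (f i.succ) (x + (i:ℕ) • y) := by
          refine Finset.sum_congr rfl fun a _ => Finset.sum_congr rfl fun y _ => ?_
          calc ∑ x : G, P x y * (starRingEnd ℂ) (P x (y + a))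
              = ∑ x : G, P (x - y) y * (starRingEnd ℂ) (P (x - y) (y + a)) :=
                (Equiv.sum_comp (Equiv.subRight y)
                  (fun z => P z y * (starRingEnd ℂ) (P z (y + a)))).symm
            _ = ∑ x : G, ∏ i : Fin k, mDeriv (((i:ℕ)+1) • a) (f i.succ) (x + (i:ℕ) • y) :=
                Finset.sum_congr rfl fun x _ => key a x y
      _ = ∑ a : G, ∑ x : G, ∑ y : G,
            ∏ i : Fin k, mDeriv (((i:ℕ)+1) • a) (f i.succ) (x + (i:ℕ) • y) :=
          Finset.sum_congr rfl fun a _ => Finset.sum_comm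
  have hS2 : (∑ x : G, ‖(B x)‖ ^ 2)
      ≤ ∑ a : G, ‖(∑ x : G, ∑ y : G,
          ∏ i : Fin k, mDeriv (((i:ℕ)+1) • a) (f i.succ) (x + (i:ℕ) • y))‖ := by
    have h0 : (0:ℝ) ≤ ∑ x : G, ‖(B x)‖ ^ 2 :=
      Finset.sum_nonneg fun x _ => sq_nonneg _
    calc (∑ x : G, ‖(B x)‖ ^ 2)
        = ‖(((∑ x : G, ‖(B x)‖ ^ 2 : ℝ) : ℂ))‖ := by
          rw [Complex.norm_real, Real.norm_eq_abs, abs_of_nonneg h0]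
      _ = ‖(∑ a : G, ∑ x : G, ∑ y : G,
            ∏ i : Fin k, mDeriv (((i:ℕ)+1) • a) (f i.succ) (x + (i:ℕ) • y))‖ := by
          rw [hBsq]
      _ ≤ ∑ a : G, ‖(∑ x : G, ∑ y : G,
            ∏ i : Fin k, mDeriv (((i:ℕ)+1) • a) (f i.succ) (x + (i:ℕ) • y))‖ :=
          norm_sum_le _ _
  calc ‖(∑ x : G, ∑ y : G, ∏ i : Fin (k+1), f i (x + (i : ℕ) • y))‖ ^ 2
      = ‖(∑ x : G, f 0 x * B x)‖ ^ 2 := by rw [hsplit]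
    _ ≤ (∑ x : G, ‖(B x)‖) ^ 2 :=
        pow_le_pow_left₀ (norm_nonneg _) habs 2
    _ ≤ (Fintype.card G : ℝ) * ∑ x : G, ‖(B x)‖ ^ 2 := hcs
    _ ≤ (Fintype.card G : ℝ) * ∑ a : G, ‖(∑ x : G, ∑ y : G,
          ∏ i : Fin k, mDeriv (((i:ℕ)+1) • a) (f i.succ) (x + (i:ℕ) • y))‖ :=
        mul_le_mul_of_nonneg_left hS2 (by positivity)

lemma step_lemma (p : ℕ) [Fact p.Prime] (n k : ℕ) (hk : 2 ≤ k) (hpk : k + 1 ≤ p)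
    (ih : ∀ f : Fin k → (Fin n → ZMod p) → ℂ,
      (∀ i x, ‖(f i x)‖ ≤ 1) →
      ‖(∑ x : Fin n → ZMod p, ∑ y : Fin n → ZMod p,
          ∏ i : Fin k, f i (x + (i : ℕ) • y))‖ ^ 2 ^ (k - 1) ≤
        (Fintype.card (Fin n → ZMod p) : ℝ) ^ (2 ^ k - k) *
          (gS (k - 1) (f ⟨k - 1, by omega⟩)).re)
    (f : Fin (k+1) → (Fin n → ZMod p) → ℂ)
    (hf : ∀ i x, ‖(f i x)‖ ≤ 1) :
    ‖(∑ x : Fin n → ZMod p, ∑ y : Fin n → ZMod p,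
        ∏ i : Fin (k+1), f i (x + (i : ℕ) • y))‖ ^ 2 ^ k ≤
      (Fintype.card (Fin n → ZMod p) : ℝ) ^ (2 ^ (k+1) - (k+1)) *
        (gS k (f ⟨k, by omega⟩)).re := by
  classical
  haveI : NeZero p := ⟨(Fact.out : p.Prime).pos.ne'⟩
  set N : ℝ := (Fintype.card (Fin n → ZMod p) : ℝ) with hN
  have hN1 : (1:ℝ) ≤ N := by
    rw [hN]; exact_mod_cast Nat.one_le_iff_ne_zero.mpr Fintype.card_ne_zero
  have hN0 : (0:ℝ) ≤ N := le_trans zero_le_one hN1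
  -- the twisted functions
  set T : (Fin n → ZMod p) → ℝ := fun a =>
    ‖(∑ x : Fin n → ZMod p, ∑ y : Fin n → ZMod p,
      ∏ i : Fin k, mDeriv (((i : ℕ) + 1) • a) (f i.succ) (x + (i : ℕ) • y))‖ with hT
  have hcs : ‖(∑ x : Fin n → ZMod p, ∑ y : Fin n → ZMod p,
      ∏ i : Fin (k+1), f i (x + (i : ℕ) • y))‖ ^ 2 ≤ N * ∑ a, T a :=
    cs_step k f (hf 0)
  -- apply the induction hypothesis to each twisted system
  have hih : ∀ a, T a ^ 2 ^ (k-1) ≤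
      N ^ (2^k - k) * (gS (k-1) (mDeriv (k • a) (f ⟨k, by omega⟩))).re := by
    intro a
    have h := ih (fun i : Fin k => mDeriv (((i : ℕ) + 1) • a) (f i.succ))
      (fun i x => mDeriv_bounded (hf i.succ) _ x)
    refine le_trans h (le_of_eq ?_)
    congr 1
    have hfs : (Fin.succ (⟨k-1, by omega⟩ : Fin k)) = (⟨k, by omega⟩ : Fin (k+1)) := by
      apply Fin.ext
      simp [Fin.val_succ]
      omega
    show (gS (k-1) (mDeriv (((k-1) + 1) • a) (f (Fin.succ (⟨k-1, by omega⟩ : Fin k))))).re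
        = (gS (k-1) (mDeriv (k • a) (f ⟨k, by omega⟩))).re
    rw [hfs, show (k-1) + 1 = k from by omega]
  -- sum over a of the Gowers sums of derivatives equals gS k
  have hre : ∑ a, (gS (k-1) (mDeriv (k • a) (f ⟨k, by omega⟩))).re
      = (gS k (f ⟨k, by omega⟩)).re := by
    have hk0 : ((k : ZMod p)) ≠ 0 := by
      intro h
      rw [ZMod.natCast_eq_zero_iff] at h
      have := Nat.le_of_dvd (by omega) h
      omega
    have h1 : ∑ a, (gS (k-1) (mDeriv (k • a) (f ⟨k, by omega⟩))).re
        = ∑ b, (gS (k-1) (mDeriv b (f ⟨k, by omega⟩))).re := by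
      have h := Equiv.sum_comp
        (⟨fun a : Fin n → ZMod p => (k : ZMod p) • a, fun a => (k : ZMod p)⁻¹ • a,
          fun a => inv_smul_smul₀ hk0 a, fun a => smul_inv_smul₀ hk0 a⟩ :
            (Fin n → ZMod p) ≃ (Fin n → ZMod p))
        (fun b => (gS (k-1) (mDeriv b (f ⟨k, by omega⟩))).re)
      simp only [Equiv.coe_fn_mk] at h
      rw [← h]
      refine Finset.sum_congr rfl fun a _ => ?_
      rw [Nat.cast_smul_eq_nsmul]
    rw [h1]
    have h2 : gS k (f ⟨k, by omega⟩)
        = ∑ b, gS (k-1) (mDeriv b (f ⟨k, by omega⟩)) := by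
      have h := gS_succ (k-1) (f ⟨k, by omega⟩)
      rw [show (k-1)+1 = k from by omega] at h
      exact h
    rw [h2, Complex.re_sum]
  -- power mean inequality
  obtain ⟨m, hm⟩ : ∃ m, 2 ^ (k-1) = m + 1 :=
    ⟨2^(k-1) - 1, by have := Nat.one_le_two_pow (n := k-1); omega⟩
  have hpm : (∑ a, T a) ^ 2 ^ (k-1) ≤ N ^ (2^(k-1) - 1) * ∑ a, T a ^ 2 ^ (k-1) := by
    rw [hm]
    have h := pow_sum_le_card_mul_sum_pow (s := Finset.univ)
      (f := T) (fun i _ => norm_nonneg _) m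
    rw [Finset.card_univ] at h
    exact h
  -- assemble
  have harith : 2^(k-1) + ((2^(k-1) - 1) + (2^k - k)) = 2^(k+1) - (k+1) := by
    have h1 : k < 2 ^ k := Nat.lt_two_pow_self
    have h2 : 2^k = 2 * 2^(k-1) := by
      rw [← pow_succ']
      congr 1
      omega
    have h3 : 2^(k+1) = 2 * 2^k := by rw [pow_succ]; ring
    have h4 : 1 ≤ 2^(k-1) := Nat.one_le_two_pow
    omega
  calc ‖(∑ x : Fin n → ZMod p, ∑ y : Fin n → ZMod p,
        ∏ i : Fin (k+1), f i (x + (i : ℕ) • y))‖ ^ 2 ^ k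
      = (‖(∑ x : Fin n → ZMod p, ∑ y : Fin n → ZMod p,
          ∏ i : Fin (k+1), f i (x + (i : ℕ) • y))‖ ^ 2) ^ 2 ^ (k-1) := by
        rw [← pow_mul]
        congr 1
        have h2 : 2^k = 2 * 2^(k-1) := by
          rw [← pow_succ']
          congr 1
          omega
        omega
    _ ≤ (N * ∑ a, T a) ^ 2 ^ (k-1) :=
        pow_le_pow_left₀ (sq_nonneg _) hcs _
    _ = N ^ 2 ^ (k-1) * (∑ a, T a) ^ 2 ^ (k-1) := by rw [mul_pow]
    _ ≤ N ^ 2 ^ (k-1) * (N ^ (2^(k-1) - 1) * ∑ a, T a ^ 2 ^ (k-1)) :=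
        mul_le_mul_of_nonneg_left hpm (by positivity)
    _ ≤ N ^ 2 ^ (k-1) * (N ^ (2^(k-1) - 1) *
          ∑ a, N ^ (2^k - k) * (gS (k-1) (mDeriv (k • a) (f ⟨k, by omega⟩))).re) := by
        refine mul_le_mul_of_nonneg_left (mul_le_mul_of_nonneg_left
          (Finset.sum_le_sum fun a _ => hih a) (by positivity)) (by positivity)
    _ = N ^ (2^(k+1) - (k+1)) * (gS k (f ⟨k, by omega⟩)).re := by
        rw [← Finset.mul_sum, hre, ← harith, pow_add, pow_add]
        ring


lemma von_neumann_aux (p : ℕ) [Fact p.Prime] (n : ℕ) (k : ℕ) (hk : 2 ≤ k) :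
    k ≤ p → ∀ f : Fin k → (Fin n → ZMod p) → ℂ,
      (∀ i x, ‖(f i x)‖ ≤ 1) →
      ‖(∑ x : Fin n → ZMod p, ∑ y : Fin n → ZMod p,
          ∏ i : Fin k, f i (x + (i : ℕ) • y))‖ ^ 2 ^ (k - 1) ≤
        (Fintype.card (Fin n → ZMod p) : ℝ) ^ (2 ^ k - k) *
          (gS (k - 1) (f ⟨k - 1, by omega⟩)).re := by
  induction k, hk using Nat.le_induction with
  | base =>
    intro _ f hf
    exact base2 f hf
  | succ k hk2 ih =>
    intro hpk f hf
    exact step_lemma p n k hk2 hpk (ih (by omega)) f hf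

/-- **Generalized von Neumann theorem.** For `2 ≤ k ≤ p` with `p` prime and `1`-bounded
functions `f₀, ..., f_{k−1} : 𝔽_pⁿ → ℂ`,
`|𝔼_{x,y} f₀(x) f₁(x+y) ⋯ f_{k−1}(x+(k−1)y)| ≤ ‖f_{k−1}‖_{U^{k−1}}`. -/
theorem generalized_von_neumann (k p : ℕ) [Fact p.Prime] (hk : 2 ≤ k) (hpk : k ≤ p)
    (n : ℕ) (f : Fin k → (Fin n → ZMod p) → ℂ)
    (hf : ∀ i x, ‖(f i x)‖ ≤ 1) :
    ‖((∑ x : Fin n → ZMod p, ∑ y : Fin n → ZMod p,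
        ∏ i : Fin k, f i (x + (i : ℕ) • y)) /
        (Fintype.card (Fin n → ZMod p) : ℂ) ^ 2)‖ ≤
      gowersNorm (k - 1) (f ⟨k - 1, by omega⟩) := by
  classical
  haveI : NeZero p := ⟨(Fact.out : p.Prime).pos.ne'⟩
  set N : ℝ := (Fintype.card (Fin n → ZMod p) : ℝ) with hN
  have hNpos : (0:ℝ) < N := by
    rw [hN]; exact_mod_cast Fintype.card_pos
  set A : ℝ := ‖(∑ x : Fin n → ZMod p, ∑ y : Fin n → ZMod p,
      ∏ i : Fin k, f i (x + (i : ℕ) • y))‖ with hA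
  set R : ℝ := (gS (k - 1) (f ⟨k - 1, by omega⟩)).re with hR
  have hmain : A ^ 2 ^ (k-1) ≤ N ^ (2^k - k) * R :=
    von_neumann_aux p n k hk hpk f hf
  have hA0 : 0 ≤ A := norm_nonneg _
  -- the left side
  have hLHS : ‖((∑ x : Fin n → ZMod p, ∑ y : Fin n → ZMod p,
        ∏ i : Fin k, f i (x + (i : ℕ) • y)) /
        (Fintype.card (Fin n → ZMod p) : ℂ) ^ 2)‖ = A / N ^ 2 := by
    rw [norm_div, norm_pow, Complex.norm_natCast, ← hA, ← hN]
  -- the right side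
  have hRHS : gowersNorm (k - 1) (f ⟨k - 1, by omega⟩)
      = (R / N ^ k) ^ ((1:ℝ) / 2 ^ (k-1)) := by
    unfold gowersNorm
    congr 1
    have hcast : ((Fintype.card (Fin n → ZMod p) : ℂ)) ^ ((k-1) + 1)
        = ((N ^ k : ℝ) : ℂ) := by
      rw [show (k-1) + 1 = k from by omega]
      push_cast
      rfl
    rw [hcast, Complex.div_ofReal_re]
    rfl
  rw [hLHS, hRHS]
  -- key power inequality
  have hkey : (A / N ^ 2) ^ 2 ^ (k-1) ≤ R / N ^ k := by
    rw [div_pow, div_le_div_iff₀ (by positivity) (by positivity)]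
    have h2k : 2 ^ k = 2 * 2 ^ (k-1) := by
      rw [← pow_succ']
      congr 1
      omega
    have hklt : k < 2 ^ k := Nat.lt_two_pow_self
    calc A ^ 2 ^ (k-1) * N ^ k ≤ (N ^ (2^k - k) * R) * N ^ k :=
          mul_le_mul_of_nonneg_right hmain (by positivity)
      _ = R * (N ^ 2) ^ 2 ^ (k-1) := by
          rw [← pow_mul, mul_comm (N ^ (2^k - k)) R, mul_assoc, ← pow_add]
          congr 2
          omega
  -- take roots
  have hq : (0:ℝ) < (2:ℝ) ^ (k-1) := by positivity
  have hb : (0:ℝ) ≤ R / N ^ k := le_trans (by positivity) hkey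
  have hcast2 : ((2 ^ (k-1) : ℕ) : ℝ) = (2:ℝ) ^ (k-1) := by push_cast; rfl
  calc A / N ^ 2
      = ((A / N ^ 2) ^ (2 ^ (k-1) : ℕ)) ^ ((1:ℝ) / 2 ^ (k-1)) := by
        rw [← Real.rpow_natCast (A / N ^ 2) (2 ^ (k-1)), ← Real.rpow_mul (by positivity),
          hcast2, mul_one_div, div_self (ne_of_gt hq), Real.rpow_one]
    _ ≤ (R / N ^ k) ^ ((1:ℝ) / 2 ^ (k-1)) :=
        Real.rpow_le_rpow (by positivity) hkey (by positivity)
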